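/- arXiv:2605.00013 — 2 statements merged into one kernel-verified Lean document; each statement's English description precedes it below -/
import Mathlib

section
/- The linear maps ε and δ satisfy the zigzag relations (relation (ii) of the Temperley–Lieb category): the composite (ε ⊗ id_V) ∘ (id_V ⊗ δ) : V → V equals the identity of V, and the composite (id_V ⊗ ε) ∘ (δ ⊗ id_V) : V → V equals the identity of V. -/
open scoped TensorProduct

noncomputable section

/-- `V = ℂ²` realized as functions `Fin 2 → ℂ`. -/
abbrev V : Type := Fin 2 → ℂ

/-- The basis vector `v₊`. -/
def vp : V := fun s => if s = 0 then 1 else 0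

/-- The basis vector `v₋`. -/
def vm : V := fun s => if s = 1 then 1 else 0

/-- The bilinear map underlying `ε`: on basis vectors,
`(v₊, v₊) ↦ 0`, `(v₊, v₋) ↦ -q`, `(v₋, v₊) ↦ 1`, `(v₋, v₋) ↦ 0`. -/
def epsBil (q : ℂ) : V →ₗ[ℂ] V →ₗ[ℂ] ℂ :=
  LinearMap.mk₂ ℂ (fun x y => -q * x 0 * y 1 + x 1 * y 0)
    (fun m₁ m₂ n => by simp only [Pi.add_apply]; ring)
    (fun c m n => by simp only [Pi.smul_apply, smul_eq_mul]; ring)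
    (fun m n₁ n₂ => by simp only [Pi.add_apply]; ring)
    (fun c m n => by simp only [Pi.smul_apply, smul_eq_mul]; ring)

/-- The linear map `ε : V ⊗ V → ℂ` with `ε(v₊⊗v₊) = 0`, `ε(v₊⊗v₋) = −q`,
`ε(v₋⊗v₊) = 1`, `ε(v₋⊗v₋) = 0`. -/
def eps (q : ℂ) : V ⊗[ℂ] V →ₗ[ℂ] ℂ := TensorProduct.lift (epsBil q)

/-- The linear map `δ : ℂ → V ⊗ V` with `δ(1) = v₊⊗v₋ − q⁻¹·(v₋⊗v₊)`. -/
def delta (q : ℂ) : ℂ →ₗ[ℂ] V ⊗[ℂ] V :=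
  LinearMap.toSpanSingleton ℂ (V ⊗[ℂ] V) (vp ⊗ₜ[ℂ] vm - q⁻¹ • (vm ⊗ₜ[ℂ] vp))

/-- The zigzag relations (relation (ii) of the Temperley–Lieb category):
`(ε ⊗ id_V) ∘ (id_V ⊗ δ) = id_V` and `(id_V ⊗ ε) ∘ (δ ⊗ id_V) = id_V`, where
`id_V ⊗ δ : V ≅ V ⊗ ℂ → V ⊗ (V ⊗ V)` is `v ↦ v ⊗ δ(1)` (reassociated), and
`δ ⊗ id_V : V ≅ ℂ ⊗ V → (V ⊗ V) ⊗ V` is `v ↦ δ(1) ⊗ v` (reassociated). -/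
theorem zigzag (q : ℂ) (hq : q ≠ 0) :
    ((TensorProduct.lid ℂ V).toLinearMap
        ∘ₗ TensorProduct.map (eps q) (LinearMap.id : V →ₗ[ℂ] V)
        ∘ₗ (TensorProduct.assoc ℂ V V V).symm.toLinearMap
        ∘ₗ (TensorProduct.mk ℂ V (V ⊗[ℂ] V)).flip (delta q 1)
      = (LinearMap.id : V →ₗ[ℂ] V)) ∧
    ((TensorProduct.rid ℂ V).toLinearMap
        ∘ₗ TensorProduct.map (LinearMap.id : V →ₗ[ℂ] V) (eps q)
        ∘ₗ (TensorProduct.assoc ℂ V V V).toLinearMap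
        ∘ₗ TensorProduct.mk ℂ (V ⊗[ℂ] V) V (delta q 1)
      = (LinearMap.id : V →ₗ[ℂ] V)) := by
  constructor <;>
  · apply Module.Basis.ext (Pi.basisFun ℂ (Fin 2))
    intro i
    have hd : delta q 1 = vp ⊗ₜ[ℂ] vm - q⁻¹ • (vm ⊗ₜ[ℂ] vp) := by
      simp [delta, LinearMap.toSpanSingleton_apply]
    simp only [LinearMap.comp_apply, LinearMap.flip_apply, TensorProduct.mk_apply, hd,
      TensorProduct.tmul_sub, TensorProduct.sub_tmul, TensorProduct.tmul_smul,
      TensorProduct.smul_tmul', map_sub, map_smul, LinearEquiv.coe_coe,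
      TensorProduct.assoc_symm_tmul, TensorProduct.assoc_tmul,
      TensorProduct.map_tmul, LinearMap.id_apply, eps, TensorProduct.lift.tmul,
      epsBil, LinearMap.mk₂_apply, TensorProduct.lid_tmul, TensorProduct.rid_tmul]
    fin_cases i <;>
      simp [vp, vm, Pi.basisFun_apply, smul_smul, inv_mul_cancel₀ hq] <;>
      ext j <;> fin_cases j <;> simp [vp, vm, mul_comm, mul_inv_cancel₀ hq]
end
end

section
/- The greedy pairing procedure produces a valid cup diagram: for any sign word k : {1,…,n} → {+,−}, let A(k) be the partial matching obtained by processing the indices i with k_i = + in increasing order and matching each such i to the greatest not-yet-matched index j < i with k_j = −, if one exists. Then (a) A(k) is noncrossing: there are no indices a < b < c < d with {a,c} ∈ A(k) and {b,d} ∈ A(k); and (b) there is no unmatched index strictly inside an arc: there are no indices j < m < i with {j,i} ∈ A(k) and m unmatched by A(k). In particular, together with the fixed points, A(k) defines an (n,p)-parenthesis diagram, where p is the number of arcs. -/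
noncomputable section

/-- One step of the greedy matching procedure on a sign word `k : Fin n → Bool`
(`true` = `+`, `false` = `−`).  The state is a pair consisting of the stack of
not-yet-matched `−` indices seen so far (in decreasing order of recency, so its head is
the greatest not-yet-matched `−` index) together with the list of arcs produced so far.
At index `i`: if `k i = −` we push `i` onto the stack; if `k i = +` we match `i` to the
greatest not-yet-matched `−` index `j < i` (the head of the stack) if one exists,
recording the arc `(j, i)`, and otherwise leave `i` unmatched. -/
def greedyStep {n : ℕ} (k : Fin n → Bool)
    (st : List (Fin n) × List (Fin n × Fin n)) (i : Fin n) :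
    List (Fin n) × List (Fin n × Fin n) :=
  if k i = false then (i :: st.1, st.2)
  else
    match st.1 with
    | [] => st
    | j :: rest => (rest, (j, i) :: st.2)

/-- The set `A(k)` of arcs of the greedy matching, obtained by processing the indices
`i` with `k i = +` in increasing order and matching each such `i` to the greatest
not-yet-matched index `j < i` with `k j = −`, if one exists.  Each arc is recorded as a
pair `(j, i)` with `j < i`, `k j = −`, `k i = +`. -/
def greedyArcs {n : ℕ} (k : Fin n → Bool) : List (Fin n × Fin n) :=
  ((List.finRange n).foldl (greedyStep k) ([], [])).2

/-- The invariant maintained by the greedy procedure after processing indices `< b`. -/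
structure GreedyInv {n : ℕ} (k : Fin n → Bool) (b : ℕ)
    (st : List (Fin n) × List (Fin n × Fin n)) : Prop where
  hS : ∀ s ∈ st.1, (s : ℕ) < b ∧ k s = false ∧ ∀ p ∈ st.2, p.1 ≠ s ∧ p.2 ≠ s
  hSsort : st.1.Chain' (· > ·)
  hA : ∀ p ∈ st.2, p.1 < p.2 ∧ (p.2 : ℕ) < b ∧ k p.1 = false ∧ k p.2 = true
  hdisj : ∀ p ∈ st.2, ∀ q ∈ st.2,
      (p.1 = q.1 ∨ p.1 = q.2 ∨ p.2 = q.1 ∨ p.2 = q.2) → p = q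
  hcross : ∀ p ∈ st.2, ∀ q ∈ st.2, p.1 < q.1 → q.1 < p.2 → p.2 < q.2 → False
  hins : ∀ p ∈ st.2, ∀ m : Fin n, p.1 < m → m < p.2 → ∃ q ∈ st.2, q.1 = m ∨ q.2 = m
  hmax : ∀ m : Fin n, (m : ℕ) < b → (∀ q ∈ st.2, q.1 ≠ m ∧ q.2 ≠ m) → m ∉ st.1 →
      ∀ s ∈ st.1, m < s

/-- Stack elements are never strictly inside an arc. -/
lemma GreedyInv.not_inside {n : ℕ} {k : Fin n → Bool} {b : ℕ}
    {st : List (Fin n) × List (Fin n × Fin n)} (h : GreedyInv k b st)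
    {s : Fin n} (hs : s ∈ st.1) {p : Fin n × Fin n} (hp : p ∈ st.2)
    (h1 : p.1 < s) (h2 : s < p.2) : False := by
  obtain ⟨q, hq, hq'⟩ := h.hins p hp s h1 h2
  have := (h.hS s hs).2.2 q hq
  rcases hq' with h' | h'
  · exact this.1 h'
  · exact this.2 h'

lemma greedyInv_step {n : ℕ} (k : Fin n → Bool) {b : ℕ} (hb : b < n)
    {st : List (Fin n) × List (Fin n × Fin n)} (h : GreedyInv k b st) :
    GreedyInv k (b + 1) (greedyStep k st ⟨b, hb⟩) := by
  obtain ⟨S, A⟩ := st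
  set i : Fin n := ⟨b, hb⟩ with hi
  by_cases hk : k i = false
  · -- push case
    have hstep : greedyStep k (S, A) i = (i :: S, A) := by simp [greedyStep, hk]
    rw [hstep]
    refine ⟨?_, ?_, ?_, h.hdisj, h.hcross, h.hins, ?_⟩
    · intro s hs
      rcases List.mem_cons.mp hs with rfl | hs
      · refine ⟨Nat.lt_succ_self b, hk, fun p hp => ?_⟩
        have h2 := (h.hA p hp).2.1
        have h1 := (h.hA p hp).1
        constructor
        · intro he; rw [he] at h1
          have : (i : ℕ) < b := lt_trans (show (i:ℕ) < (p.2:ℕ) from h1) h2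
          simp [hi] at this
        · intro he; rw [he] at h2; simp [hi] at h2
      · obtain ⟨h1, h2, h3⟩ := h.hS s hs
        exact ⟨Nat.lt_succ_of_lt h1, h2, h3⟩
    · simp only [List.Chain', List.isChain_cons]
      refine ⟨fun y hy => ?_, h.hSsort⟩
      have hyS : y ∈ S := by
        cases S with
        | nil => simp at hy
        | cons a t => simp_all
      exact Fin.mk_lt_of_lt_val (h.hS y hyS).1
    · intro p hp
      obtain ⟨h1, h2, h3⟩ := h.hA p hp
      exact ⟨h1, Nat.lt_succ_of_lt h2, h3⟩
    · intro m hm hme hmS s hs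
      rcases List.mem_cons.mp hs with rfl | hs
      · have : m ≠ i := fun he => hmS (by rw [he]; exact List.mem_cons_self)
        have : (m : ℕ) < b := by
          rcases Nat.lt_succ_iff_lt_or_eq.mp hm with h' | h'
          · exact h'
          · exact absurd (Fin.ext h') this
        exact Fin.mk_lt_of_lt_val this
      · exact h.hmax m (by
          rcases Nat.lt_succ_iff_lt_or_eq.mp hm with h' | h'
          · exact h'
          · exfalso; exact hmS (by rw [show m = i from Fin.ext h']; exact List.mem_cons_self))
          hme (fun hmem => hmS (List.mem_cons_of_mem _ hmem)) s hs
  · -- plus case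
    cases S with
    | nil =>
      have hstep : greedyStep k (([] : List (Fin n)), A) i = ([], A) := by
        simp [greedyStep, hk]
      rw [hstep]
      refine ⟨by simp, List.isChain_nil, ?_, h.hdisj, h.hcross, h.hins, by simp⟩
      · intro p hp
        obtain ⟨h1, h2, h3⟩ := h.hA p hp
        exact ⟨h1, Nat.lt_succ_of_lt h2, h3⟩
    | cons j rest =>
      have hstep : greedyStep k (j :: rest, A) i = (rest, (j, i) :: A) := by
        simp [greedyStep, hk]
      rw [hstep]
      -- basic facts
      have hjS : j ∈ j :: rest := List.mem_cons_self
      have hjb : (j : ℕ) < b := (h.hS j hjS).1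
      have hji : j < i := Fin.mk_lt_of_lt_val hjb
      have hkj : k j = false := (h.hS j hjS).2.1
      have hjA : ∀ p ∈ A, p.1 ≠ j ∧ p.2 ≠ j := (h.hS j hjS).2.2
      have hrest_lt : ∀ x ∈ rest, x < j := by
        have := List.isChain_iff_pairwise.mp h.hSsort
        exact (List.pairwise_cons.mp this).1
      have hib : ∀ p ∈ A, p.1 ≠ i ∧ p.2 ≠ i := by
        intro p hp
        obtain ⟨h1, h2, _⟩ := h.hA p hp
        constructor
        · intro he; rw [he] at h1
          exact absurd (lt_trans (show (i:ℕ) < (p.2:ℕ) from h1) h2) (by simp [hi])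
        · intro he; rw [he] at h2; simp [hi] at h2
      -- every m strictly between j and i is an endpoint of A
      have hbetween : ∀ m : Fin n, j < m → m < i → ∃ q ∈ A, q.1 = m ∨ q.2 = m := by
        intro m h1 h2
        by_contra hne
        push_neg at hne
        have hme : ∀ q ∈ A, q.1 ≠ m ∧ q.2 ≠ m := hne
        have hmS : m ∉ j :: rest := by
          intro hmem
          rcases List.mem_cons.mp hmem with rfl | hmem
          · exact lt_irrefl _ h1
          · exact absurd (hrest_lt m hmem) (not_lt.mpr (le_of_lt h1))
        have hmb : (m : ℕ) < b := by simpa [hi, Fin.lt_def] using h2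
        have := h.hmax m hmb hme hmS j hjS
        exact absurd h1 (not_lt.mpr this.le)
      refine ⟨?_, (List.isChain_cons.mp h.hSsort).2, ?_, ?_, ?_, ?_, ?_⟩
      · -- hS
        intro s hs
        have hsS : s ∈ j :: rest := List.mem_cons_of_mem _ hs
        obtain ⟨h1, h2, h3⟩ := h.hS s hsS
        refine ⟨Nat.lt_succ_of_lt h1, h2, ?_⟩
        intro p hp
        rcases List.mem_cons.mp hp with rfl | hp
        · exact ⟨fun he => absurd (he ▸ hrest_lt s hs) (lt_irrefl _),
            fun he => absurd (he ▸ h1) (by simp [hi])⟩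
        · exact h3 p hp
      · -- hA
        intro p hp
        rcases List.mem_cons.mp hp with rfl | hp
        · exact ⟨hji, by simp [hi], hkj, by simpa using hk⟩
        · obtain ⟨h1, h2, h3⟩ := h.hA p hp
          exact ⟨h1, Nat.lt_succ_of_lt h2, h3⟩
      · -- hdisj
        intro p hp q hq he
        rcases List.mem_cons.mp hp with rfl | hp <;> rcases List.mem_cons.mp hq with rfl | hq
        · rfl
        · exfalso
          rcases he with h' | h' | h' | h'
          · exact (hjA q hq).1 h'.symm
          · exact (hjA q hq).2 h'.symm
          · exact (hib q hq).1 h'.symm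
          · exact (hib q hq).2 h'.symm
        · exfalso
          rcases he with h' | h' | h' | h'
          · exact (hjA p hp).1 h'
          · exact (hib p hp).1 h'
          · exact (hjA p hp).2 h'
          · exact (hib p hp).2 h'
        · exact h.hdisj p hp q hq he
      · -- hcross
        intro p hp q hq h1 h2 h3
        rcases List.mem_cons.mp hp with rfl | hp <;> rcases List.mem_cons.mp hq with rfl | hq
        · exact lt_irrefl _ h1
        · -- p = (j,i), q old : i < q.2 but q.2 < i
          have := (h.hA q hq).2.1
          simp only at h3
          exact absurd (lt_trans (show (i:ℕ) < (q.2:ℕ) from h3) this) (by simp [hi])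
        · -- p old, q = (j,i): p.1 < j < p.2, j inside p, contradiction
          exact GreedyInv.not_inside h hjS hp h1 h2
        · exact h.hcross p hp q hq h1 h2 h3
      · -- hins
        intro p hp m h1 h2
        rcases List.mem_cons.mp hp with rfl | hp
        · obtain ⟨q, hq, hq'⟩ := hbetween m h1 h2
          exact ⟨q, List.mem_cons_of_mem _ hq, hq'⟩
        · obtain ⟨q, hq, hq'⟩ := h.hins p hp m h1 h2
          exact ⟨q, List.mem_cons_of_mem _ hq, hq'⟩
      · -- hmax
        intro m hm hme hmS s hs
        have hmj : m ≠ j := fun he => ((hme (j, i) (List.mem_cons_self)).1 he.symm)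
        have hmi : m ≠ i := fun he => ((hme (j, i) (List.mem_cons_self)).2 he.symm)
        have hmb : (m : ℕ) < b := by
          rcases Nat.lt_succ_iff_lt_or_eq.mp hm with h' | h'
          · exact h'
          · exact absurd (Fin.ext h') hmi
        have hme' : ∀ q ∈ A, q.1 ≠ m ∧ q.2 ≠ m := fun q hq =>
          hme q (List.mem_cons_of_mem _ hq)
        have hmS' : m ∉ j :: rest := by
          intro hmem
          rcases List.mem_cons.mp hmem with rfl | hmem
          · exact hmj rfl
          · exact hmS hmem
        exact h.hmax m hmb hme' hmS' s (List.mem_cons_of_mem _ hs)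

lemma greedyInv_prefix {n : ℕ} (k : Fin n → Bool) :
    ∀ b ≤ n, GreedyInv k b (((List.finRange n).take b).foldl (greedyStep k) ([], [])) := by
  intro b
  induction b with
  | zero => intro _; exact ⟨by simp, List.isChain_nil, by simp, by simp, by simp, by simp, by simp⟩
  | succ b ih =>
    intro hb
    have hbn : b < n := hb
    have ht : (List.finRange n).take (b+1) = (List.finRange n).take b ++ [⟨b, hbn⟩] := by
      rw [List.take_succ]
      simp [List.getElem?_eq_getElem, List.length_finRange, hbn, List.getElem_finRange]
    rw [ht, List.foldl_append]
    exact greedyInv_step k hbn (ih hbn.le)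

lemma greedyInv_final {n : ℕ} (k : Fin n → Bool) :
    GreedyInv k n ((List.finRange n).foldl (greedyStep k) ([], [])) := by
  have h := greedyInv_prefix k n le_rfl
  have e : (List.finRange n).take n = List.finRange n := by simp
  rwa [e] at h

/-- The greedy pairing procedure produces a valid cup diagram:
(a) `A(k)` is noncrossing: there are no `a < b < c < d` with `{a,c}, {b,d} ∈ A(k)`;
(b) there is no unmatched index strictly inside an arc: there are no `j < m < i` with
`{j,i} ∈ A(k)` and `m` unmatched by `A(k)`.
In particular (together with the facts that every arc `(j,i)` satisfies `j < i`,
`k j = −`, `k i = +`, and that distinct arcs are disjoint, so that `A(k)` together with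
the fixed points defines an involution), `A(k)` defines an `(n,p)`-parenthesis diagram,
where `p` is the number of arcs. -/
theorem greedy_matching_is_parenthesis_diagram (n : ℕ) (k : Fin n → Bool) :
    -- (a) noncrossing
    (∀ a b c d : Fin n, a < b → b < c → c < d →
        (a, c) ∈ greedyArcs k → (b, d) ∈ greedyArcs k → False) ∧
    -- (b) no unmatched index strictly inside an arc
    (∀ j m i : Fin n, j < m → m < i → (j, i) ∈ greedyArcs k →
        (∀ p ∈ greedyArcs k, p.1 ≠ m ∧ p.2 ≠ m) → False) ∧
    -- each arc joins a `−` to a later `+`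
    (∀ p ∈ greedyArcs k, p.1 < p.2 ∧ k p.1 = false ∧ k p.2 = true) ∧
    -- distinct arcs share no endpoint (so `A(k)` is a partial matching)
    (∀ p ∈ greedyArcs k, ∀ p' ∈ greedyArcs k,
        (p.1 = p'.1 ∨ p.1 = p'.2 ∨ p.2 = p'.1 ∨ p.2 = p'.2) → p = p') := by
  have h := greedyInv_final k
  refine ⟨?_, ?_, ?_, h.hdisj⟩
  · intro a b c d hab hbc hcd h1 h2
    exact h.hcross (a, c) h1 (b, d) h2 hab hbc hcd
  · intro j m i hjm hmi h1 h2
    obtain ⟨q, hq, hq'⟩ := h.hins (j, i) h1 m hjm hmi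
    rcases hq' with h' | h'
    · exact (h2 q hq).1 h'
    · exact (h2 q hq).2 h'
  · intro p hp
    obtain ⟨h1, _, h2⟩ := h.hA p hp
    exact ⟨h1, h2⟩
end
end
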